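/- Let Ψ₀ be a unit spinor with ω·Ψ₀ = −7Ψ₀. Then ω acts as the identity on the 7-dimensional space {X·Ψ₀ : X ∈ R^7}, i.e. ω·(X·Ψ₀) = X·Ψ₀ for all X ∈ R^7. -/

import Mathlib

/-- The negative definite quadratic form on ℝ⁷ (convention eᵢ·eᵢ = −1). -/
noncomputable def Q : QuadraticForm ℝ (Fin 7 → ℝ) :=
  QuadraticMap.weightedSumSquares ℝ (fun _ : Fin 7 => (-1 : ℝ))

/-- The Clifford generators e₁,…,e₇ (0-indexed: `e i` is e_{i+1}). -/
noncomputable def e (i : Fin 7) : CliffordAlgebra Q := CliffordAlgebra.ι Q (Pi.single i 1)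

/-- ω = e₁₂₃ − e₁₄₅ − e₁₆₇ − e₂₄₆ + e₂₅₇ − e₃₄₇ − e₃₅₆ as a Clifford algebra element. -/
noncomputable def ω : CliffordAlgebra Q :=
  e 0 * e 1 * e 2 - e 0 * e 3 * e 4 - e 0 * e 5 * e 6 - e 1 * e 3 * e 5
    + e 1 * e 4 * e 6 - e 2 * e 3 * e 6 - e 2 * e 4 * e 5

/-- The characteristic torsion element T = 2ω − 8e₁₂₃. -/
noncomputable def T : CliffordAlgebra Q := (2 : ℝ) • ω - (8 : ℝ) • (e 0 * e 1 * e 2)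

/-!
`ω` is the sum of the seven terms `±e_a e_b e_c` indexed by the lines `{a, b, c}` of the Fano
plane. These terms are commuting involutions, and an eigenvalue of a sum of `n` commuting
involutions has absolute value at most `n`, with `-n` attained only on the common
`-1`-eigenspace; so `ω Ψ₀ = -7 Ψ₀` forces every term to act on `Ψ₀` by `-1`. A generator `e_j`
commutes with the three terms whose line contains `j` and anticommutes with the other four,
hence `ω (e_j Ψ₀) = e_j (-3 + 4) Ψ₀ = e_j Ψ₀`.
-/

section SignCommute

variable {R : Type*} [Ring R]

def SignCommute (ε : ℤˣ) (x y : R) : Prop := x * y = ε • (y * x)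

namespace SignCommute

variable {ε α β : ℤˣ} {x y a b : R}

theorem symm (h : SignCommute ε x y) : SignCommute ε y x := by
  rw [SignCommute, h, smul_smul, Int.units_mul_self, one_smul]

theorem mul_right (ha : SignCommute α x a) (hb : SignCommute β x b) :
    SignCommute (α * β) x (a * b) := by
  rw [SignCommute, ← mul_assoc, ha, smul_mul_assoc, mul_assoc, hb, mul_smul_comm, smul_smul,
    mul_assoc]

theorem units_smul_left (h : SignCommute ε x y) (u : ℤˣ) : SignCommute ε (u • x) y := by
  rw [SignCommute, smul_mul_assoc, h, mul_smul_comm, smul_comm]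

theorem commute (h : SignCommute 1 x y) : Commute x y := by
  rw [SignCommute, one_smul] at h
  exact h

end SignCommute

end SignCommute

section CommutingInvolutions

variable {A M ι : Type*} [Ring A] [AddCommGroup M] [Module A M] (t : ι → A)

theorem sum_smul_smul_eq_of_signCommute (s : Finset ι) (y : A) (ε : ι → ℤˣ)
    (h : ∀ i ∈ s, SignCommute (ε i) (t i) y) {v : M} (hv : ∀ i ∈ s, t i • v = -v) :
    (∑ i ∈ s, t i) • y • v = -(∑ i ∈ s, (ε i : ℤ)) • y • v := by
  rw [Finset.sum_smul, neg_smul, Finset.sum_smul, ← Finset.sum_neg_distrib]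
  refine Finset.sum_congr rfl fun i hi => ?_
  rw [← mul_smul, h i hi, Units.smul_def, smul_assoc, mul_smul, hv i hi, smul_neg, smul_neg]

variable [IsAddTorsionFree M]

theorem eq_zero_of_sum_smul_eq_of_card_lt (s : Finset ι) (hinv : ∀ i ∈ s, t i * t i = 1)
    (hcomm : ∀ i ∈ s, ∀ j ∈ s, Commute (t i) (t j)) {n : ℤ} {v : M}
    (hv : (∑ i ∈ s, t i) • v = n • v) (hn : (s.card : ℤ) < |n|) : v = 0 := by
  classical
  induction s using Finset.induction_on generalizing n v with
  | empty =>
    simp only [Finset.sum_empty, zero_smul, Finset.card_empty, Nat.cast_zero, abs_pos] at hv hn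
    exact (smul_eq_zero.mp hv.symm).resolve_left hn
  | insert a s ha ih =>
    set C := ∑ i ∈ s, t i
    have hta : t a * t a = 1 := hinv a (s.mem_insert_self a)
    have hC : Commute (t a) C :=
      Commute.sum_right _ _ _ fun i hi => hcomm a (s.mem_insert_self a) i (s.mem_insert_of_mem hi)
    have hCv : C • v = n • v - t a • v := by
      rw [Finset.sum_insert ha, add_smul] at hv
      rw [← hv, add_sub_cancel_left]
    -- `v + ε • t a • v` is an eigenvector of `C` for the eigenvalue `n - ε`.
    have hcomp : ∀ ε : ℤ, ε * ε = 1 → v + ε • t a • v = 0 := by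
      intro ε hε
      refine ih (fun i hi => hinv i (s.mem_insert_of_mem hi))
        (fun i hi j hj => hcomm i (s.mem_insert_of_mem hi) j (s.mem_insert_of_mem hj))
        (n := n - ε) ?_ ?_
      · rw [smul_add, hCv, smul_comm C ε, ← mul_smul, ← hC, mul_smul, hCv, smul_sub, ← mul_smul,
          hta, one_smul, smul_comm (t a) n]
        generalize t a • v = x
        linear_combination (norm := module) hε • x
      · have : |ε| = 1 := by nlinarith [abs_mul_abs_self ε, abs_nonneg ε]
        have := abs_sub_abs_le_abs_sub n ε
        rw [Finset.card_insert_of_notMem ha] at hn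
        push_cast at hn
        linarith
    have h2v : (2 : ℕ) • v = 0 := by
      rw [two_nsmul]
      calc v + v = (v + (1 : ℤ) • t a • v) + (v + (-1 : ℤ) • t a • v) := by
            rw [one_smul, neg_smul, one_smul]; abel
        _ = 0 := by rw [hcomp 1 rfl, hcomp (-1) rfl, add_zero]
    exact two_nsmul_eq_zero.mp h2v

theorem smul_eq_neg_of_sum_smul_eq_neg_card (s : Finset ι) (hinv : ∀ i ∈ s, t i * t i = 1)
    (hcomm : ∀ i ∈ s, ∀ j ∈ s, Commute (t i) (t j)) {v : M}
    (hv : (∑ i ∈ s, t i) • v = -(s.card : ℤ) • v) {j : ι} (hj : j ∈ s) : t j • v = -v := by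
  classical
  set w := v + t j • v
  have htw : t j • w = w := by
    rw [smul_add, ← mul_smul, hinv j hj, one_smul, add_comm]
  have hsum : (∑ i ∈ s, t i) • w = -(s.card : ℤ) • w := by
    have hC : Commute (t j) (∑ i ∈ s, t i) := Commute.sum_right _ _ _ fun i hi => hcomm j hj i hi
    rw [smul_add, ← mul_smul, ← hC, mul_smul, hv, smul_comm (t j), ← smul_add]
  have hrest : (∑ i ∈ s.erase j, t i) • w = (-(s.card : ℤ) - 1) • w := by
    rw [← Finset.add_sum_erase s t hj, add_smul, htw] at hsum
    rw [sub_smul, one_smul, ← hsum, add_sub_cancel_left]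
  have hw : w = 0 := by
    refine eq_zero_of_sum_smul_eq_of_card_lt t (s.erase j)
      (fun i hi => hinv i (Finset.mem_of_mem_erase hi))
      (fun i hi k hk => hcomm i (Finset.mem_of_mem_erase hi) k (Finset.mem_of_mem_erase hk))
      hrest ?_
    rw [Finset.card_erase_of_mem hj, abs_of_neg (by omega)]
    omega
  exact eq_neg_of_add_eq_zero_right hw

end CommutingInvolutions

theorem e_mul_self (i : Fin 7) : e i * e i = -1 := by
  have hQ : Q (Pi.single i 1) = -1 := by
    simp [Q, QuadraticMap.weightedSumSquares_apply, Pi.single_apply]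
  rw [e, CliffordAlgebra.ι_sq_scalar, hQ, map_neg, map_one]

theorem Q_isOrtho_single {i j : Fin 7} (h : i ≠ j) :
    Q.IsOrtho (Pi.single i 1) (Pi.single j 1) := by
  rw [QuadraticMap.isOrtho_def]
  simp [Q, QuadraticMap.weightedSumSquares_apply, Pi.single_apply, mul_add, Finset.sum_add_distrib,
    h, h.symm]

theorem e_mul_e_comm_of_ne {i j : Fin 7} (h : i ≠ j) : e i * e j = -(e j * e i) :=
  CliffordAlgebra.ι_mul_ι_comm_of_isOrtho (Q_isOrtho_single h)

theorem ι_eq_sum_smul_e (X : Fin 7 → ℝ) : CliffordAlgebra.ι Q X = ∑ i, X i • e i := by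
  conv_lhs => rw [← Finset.univ_sum_single X]
  rw [map_sum]
  refine Finset.sum_congr rfl fun i _ => ?_
  rw [e, ← map_smul, ← Pi.single_smul', smul_eq_mul, mul_one]

def eSign (i j : Fin 7) : ℤˣ := if i = j then 1 else -1

theorem signCommute_e (i j : Fin 7) : SignCommute (eSign i j) (e i) (e j) := by
  unfold SignCommute eSign
  split_ifs with h
  · rw [h, one_smul]
  · rw [e_mul_e_comm_of_ne h, Units.neg_smul, one_smul]

noncomputable def tripleProd (l : Fin 7 × Fin 7 × Fin 7) : CliffordAlgebra Q :=
  e l.1 * e l.2.1 * e l.2.2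

def tripleSign (j : Fin 7) (l : Fin 7 × Fin 7 × Fin 7) : ℤˣ :=
  eSign j l.1 * eSign j l.2.1 * eSign j l.2.2

theorem signCommute_e_tripleProd (j : Fin 7) (l : Fin 7 × Fin 7 × Fin 7) :
    SignCommute (tripleSign j l) (e j) (tripleProd l) :=
  ((signCommute_e _ _).mul_right (signCommute_e _ _)).mul_right (signCommute_e _ _)

theorem tripleProd_mul_self {l : Fin 7 × Fin 7 × Fin 7} (h₀₁ : l.1 ≠ l.2.1) (h₀₂ : l.1 ≠ l.2.2)
    (h₁₂ : l.2.1 ≠ l.2.2) : tripleProd l * tripleProd l = 1 := by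
  obtain ⟨a, b, c⟩ := l
  have hc : Commute (e c) (e a * e b) := by
    rw [Commute, SemiconjBy, ← mul_assoc, e_mul_e_comm_of_ne h₀₂.symm, neg_mul, mul_assoc,
      e_mul_e_comm_of_ne h₁₂.symm, mul_neg, neg_neg, mul_assoc]
  calc tripleProd (a, b, c) * tripleProd (a, b, c) = e a * (e b * e a) * e b * (e c * e c) := by
        rw [tripleProd, mul_assoc (e a * e b), ← mul_assoc (e c), hc.eq]; noncomm_ring
    _ = 1 := by
      rw [e_mul_e_comm_of_ne h₀₁.symm]
      simp only [mul_neg, neg_mul, ← mul_assoc, e_mul_self, neg_neg, one_mul]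

def fanoLine : Fin 7 → Fin 7 × Fin 7 × Fin 7 :=
  ![(0, 1, 2), (0, 3, 4), (0, 5, 6), (1, 3, 5), (1, 4, 6), (2, 3, 6), (2, 4, 5)]

def fanoSign : Fin 7 → ℤˣ := ![1, -1, -1, -1, 1, -1, -1]

noncomputable def ωTerm (i : Fin 7) : CliffordAlgebra Q := fanoSign i • tripleProd (fanoLine i)

theorem ω_eq_sum_ωTerm : ω = ∑ i, ωTerm i := by
  simp [ω, ωTerm, Fin.sum_univ_seven, fanoSign, fanoLine, tripleProd]
  abel

theorem ωTerm_mul_self (i : Fin 7) : ωTerm i * ωTerm i = 1 := by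
  rw [ωTerm, smul_mul_smul_comm, Int.units_mul_self, one_smul]
  apply tripleProd_mul_self <;> revert i <;> decide

theorem signCommute_ωTerm_e (i j : Fin 7) :
    SignCommute (tripleSign j (fanoLine i)) (ωTerm i) (e j) :=
  (signCommute_e_tripleProd j _).symm.units_smul_left _

theorem commute_ωTerm (i k : Fin 7) : Commute (ωTerm i) (ωTerm k) := by
  have h : SignCommute (tripleSign (fanoLine k).1 (fanoLine i) *
      tripleSign (fanoLine k).2.1 (fanoLine i) * tripleSign (fanoLine k).2.2 (fanoLine i))
      (ωTerm i) (tripleProd (fanoLine k)) :=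
    ((signCommute_ωTerm_e i _).mul_right (signCommute_ωTerm_e i _)).mul_right
      (signCommute_ωTerm_e i _)
  -- Two distinct lines of the Fano plane meet in exactly one point.
  have hsign : ∀ i k : Fin 7, tripleSign (fanoLine k).1 (fanoLine i) *
      tripleSign (fanoLine k).2.1 (fanoLine i) * tripleSign (fanoLine k).2.2 (fanoLine i) = 1 := by
    decide
  rw [hsign] at h
  exact (h.symm.units_smul_left (fanoSign k)).symm.commute

-- Each point lies on three of the seven lines: `3 - 4 = -1`.
theorem sum_tripleSign_fanoLine (j : Fin 7) : ∑ i, (tripleSign j (fanoLine i) : ℤ) = -1 := by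
  revert j; decide

theorem stmt10_general (S : Type) [NormedAddCommGroup S] [InnerProductSpace ℝ S]
    [Module (CliffordAlgebra Q) S] [IsScalarTower ℝ (CliffordAlgebra Q) S]
    (Ψ₀ : S) (hΨ : ω • Ψ₀ = (-7 : ℝ) • Ψ₀) :
    ∀ X : Fin 7 → ℝ, ω • (CliffordAlgebra.ι Q X • Ψ₀) = CliffordAlgebra.ι Q X • Ψ₀ := by
  have : IsAddTorsionFree S := .of_isTorsionFree ℝ S
  have hsum : (∑ i, ωTerm i) • Ψ₀ = -((Finset.univ : Finset (Fin 7)).card : ℤ) • Ψ₀ := by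
    rw [← ω_eq_sum_ωTerm, hΨ, ← Int.cast_smul_eq_zsmul ℝ]
    norm_num
  have hterm (i : Fin 7) : ωTerm i • Ψ₀ = -Ψ₀ :=
    smul_eq_neg_of_sum_smul_eq_neg_card ωTerm _ (fun i _ => ωTerm_mul_self i)
      (fun i _ k _ => commute_ωTerm i k) hsum (Finset.mem_univ i)
  have he (j : Fin 7) : ω • e j • Ψ₀ = e j • Ψ₀ := by
    rw [ω_eq_sum_ωTerm, sum_smul_smul_eq_of_signCommute ωTerm _ (e j) _
      (fun i _ => signCommute_ωTerm_e i j) (fun i _ => hterm i), sum_tripleSign_fanoLine,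
      neg_neg, one_smul]
  intro X
  simp only [ι_eq_sum_smul_e, Finset.sum_smul, Finset.smul_sum, smul_assoc, smul_comm ω, he]

/-- if Ψ₀ is a unit spinor with ω·Ψ₀ = −7Ψ₀, then ω acts as the
identity on {X·Ψ₀ : X ∈ ℝ⁷}: ω·(X·Ψ₀) = X·Ψ₀ for all X. -/
theorem stmt10 (S : Type) [NormedAddCommGroup S] [InnerProductSpace ℝ S]
    [Module (CliffordAlgebra Q) S] [IsScalarTower ℝ (CliffordAlgebra Q) S]
    (hdim : Module.finrank ℝ S = 8)
    (Ψ₀ : S) (hunit : ‖Ψ₀‖ = 1) (hΨ : ω • Ψ₀ = (-7 : ℝ) • Ψ₀) :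
    ∀ X : Fin 7 → ℝ, ω • (CliffordAlgebra.ι Q X • Ψ₀) = CliffordAlgebra.ι Q X • Ψ₀ :=
  stmt10_general S Ψ₀ hΨ
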